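/- Let κ₁, κ₂ : 𝔹^m → 𝔹 be non-constant with κ₁ ⊨ κ₂ and κ₁ ≠ κ₂, and define κ(y, x_n) = κ₂(y) if x_n = 1, κ₁(y) if x_n = 0, on n = m+1 features. For v = (u, 1) with κ₂(u)=0, and for every S ⊆ {1,...,m}, φ(S∪{n}) − φ(S) = 2^{-(m-|S|)-1} (Σ_{y agreeing with u on S} κ₂(y) − Σ_{y agreeing with u on S} κ₁(y)), which is nonnegative; consequently Sv(n) ≥ 0, with Sv(n) > 0 whenever κ₁ and κ₂ differ on some point agreeing with u on some S. -/

import Mathlib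

/-! Write a point of `𝔹^(m+1)` as `(y, xₙ)`. Fixing `S ∪ {n}` with `vₙ = 1` leaves only the
points `(y, 1)`, where `κ = κ₂`; fixing `S` alone averages `κ₂` and `κ₁` with equal weight.
Hence the marginal contribution of `n` is half the difference of the averages of `κ₂` and `κ₁`
over the points agreeing with `u` on `S`, which is nonnegative since `κ₁ ⊨ κ₂`, and positive at
`S = ∅` as soon as `κ₁ ≠ κ₂`. The Shapley weights being positive, `Sv(n)` inherits both signs. -/

open Finset

/-- `X` is a weak abductive explanation (weak AXp) for classifier `κ` at point `v`:
every point agreeing with `v` on `X` gets the same prediction as `v`. -/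
def weakAXp {n : ℕ} (κ : (Fin n → Bool) → Bool) (v : Fin n → Bool)
    (X : Finset (Fin n)) : Prop :=
  ∀ x : Fin n → Bool, (∀ i ∈ X, x i = v i) → κ x = κ v

/-- `X` is an AXp: a subset-minimal weak AXp. -/
def AXp {n : ℕ} (κ : (Fin n → Bool) → Bool) (v : Fin n → Bool)
    (X : Finset (Fin n)) : Prop :=
  weakAXp κ v X ∧ ∀ X' ⊂ X, ¬ weakAXp κ v X'

/-- `Y` is a weak contrastive explanation (weak CXp) for `κ` at `v`:
some point agreeing with `v` outside `Y` gets a different prediction. -/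
def weakCXp {n : ℕ} (κ : (Fin n → Bool) → Bool) (v : Fin n → Bool)
    (Y : Finset (Fin n)) : Prop :=
  ∃ x : Fin n → Bool, (∀ i ∉ Y, x i = v i) ∧ κ x ≠ κ v

/-- `Y` is a CXp: a subset-minimal weak CXp. -/
def CXp {n : ℕ} (κ : (Fin n → Bool) → Bool) (v : Fin n → Bool)
    (Y : Finset (Fin n)) : Prop :=
  weakCXp κ v Y ∧ ∀ Y' ⊂ Y, ¬ weakCXp κ v Y'

/-- A feature is relevant if it occurs in some AXp. -/
def Relevant {n : ℕ} (κ : (Fin n → Bool) → Bool) (v : Fin n → Bool) (i : Fin n) : Prop :=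
  ∃ X, AXp κ v X ∧ i ∈ X

/-- A feature is irrelevant if it occurs in no AXp. -/
def Irrelevant {n : ℕ} (κ : (Fin n → Bool) → Bool) (v : Fin n → Bool) (i : Fin n) : Prop :=
  ¬ Relevant κ v i

/-- `phi κ v S` : average value of `κ` over points agreeing with `v` on `S`
(uniform distribution). -/
noncomputable def phi {n : ℕ} (κ : (Fin n → Bool) → Bool) (v : Fin n → Bool)
    (S : Finset (Fin n)) : ℝ :=
  (1 / 2 ^ (n - S.card)) *
    ∑ x ∈ Finset.univ.filter (fun x : Fin n → Bool => ∀ i ∈ S, x i = v i),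
      (if κ x then (1 : ℝ) else 0)

/-- Shapley value of feature `i` for classifier `κ` at point `v`. -/
noncomputable def Sv {n : ℕ} (κ : (Fin n → Bool) → Bool) (v : Fin n → Bool)
    (i : Fin n) : ℝ :=
  ∑ S ∈ (Finset.univ.erase i).powerset,
    ((S.card.factorial * (n - S.card - 1).factorial : ℝ) / n.factorial) *
      (phi κ v (insert i S) - phi κ v S)

noncomputable def sumAgreeing {m : ℕ} (f : (Fin m → Bool) → ℝ) (u : Fin m → Bool)
    (T : Finset (Fin m)) : ℝ :=
  ∑ y ∈ univ.filter (fun y : Fin m → Bool => ∀ i ∈ T, y i = u i), f y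

lemma phi_eq_sumAgreeing {n : ℕ} (κ : (Fin n → Bool) → Bool) (v : Fin n → Bool)
    (S : Finset (Fin n)) :
    phi κ v S = 1 / 2 ^ (n - S.card) * sumAgreeing (fun x => if κ x then 1 else 0) v S :=
  rfl

lemma sumAgreeing_sub {m : ℕ} (f g : (Fin m → Bool) → ℝ) (u : Fin m → Bool)
    (T : Finset (Fin m)) :
    sumAgreeing (fun y => f y - g y) u T = sumAgreeing f u T - sumAgreeing g u T :=
  sum_sub_distrib ..

lemma sumAgreeing_add {m : ℕ} (f g : (Fin m → Bool) → ℝ) (u : Fin m → Bool)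
    (T : Finset (Fin m)) :
    sumAgreeing (fun y => f y + g y) u T = sumAgreeing f u T + sumAgreeing g u T :=
  sum_add_distrib

lemma sumAgreeing_mono {m : ℕ} {f g : (Fin m → Bool) → ℝ} (hfg : ∀ y, f y ≤ g y)
    (u : Fin m → Bool) (T : Finset (Fin m)) :
    sumAgreeing f u T ≤ sumAgreeing g u T :=
  sum_le_sum fun y _ => hfg y

lemma sumAgreeing_lt_sumAgreeing {m : ℕ} {f g : (Fin m → Bool) → ℝ} (hfg : ∀ y, f y ≤ g y)
    {u : Fin m → Bool} {T : Finset (Fin m)} {y₀ : Fin m → Bool} (hy₀ : ∀ i ∈ T, y₀ i = u i)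
    (hlt : f y₀ < g y₀) :
    sumAgreeing f u T < sumAgreeing g u T :=
  sum_lt_sum (fun y _ => hfg y) ⟨y₀, by simpa using hy₀, hlt⟩

lemma sum_fun_fin_succ {α M : Type*} [Fintype α] [AddCommMonoid M] {m : ℕ}
    (f : (Fin (m + 1) → α) → M) :
    ∑ x, f x = ∑ y : Fin m → α, ∑ a, f (Fin.snoc y a) := by
  rw [← Fintype.sum_equiv (Fin.snocEquiv fun _ => α) (fun p => f (Fin.snoc p.2 p.1)) f
    (fun _ => rfl), Fintype.sum_prod_type, sum_comm]

lemma sumAgreeing_map_castSuccEmb {m : ℕ} (f : (Fin (m + 1) → Bool) → ℝ)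
    (v : Fin (m + 1) → Bool) (T : Finset (Fin m)) :
    sumAgreeing f v (T.map Fin.castSuccEmb)
      = sumAgreeing (fun y => ∑ b, f (Fin.snoc y b)) (Fin.init v) T := by
  rw [sumAgreeing, sumAgreeing, sum_filter, sum_filter, sum_fun_fin_succ]
  refine sum_congr rfl fun y _ => ?_
  simp only [forall_mem_map, Fin.coe_castSuccEmb, Fin.snoc_castSucc, Fin.init]
  rw [sum_ite_irrel, sum_const_zero]
  congr 1 -- the two `if`s differ only in their `Decidable` instances

lemma sumAgreeing_insert_last_map_castSuccEmb {m : ℕ} (f : (Fin (m + 1) → Bool) → ℝ)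
    (v : Fin (m + 1) → Bool) (T : Finset (Fin m)) :
    sumAgreeing f v (insert (Fin.last m) (T.map Fin.castSuccEmb))
      = sumAgreeing (fun y => f (Fin.snoc y (v (Fin.last m)))) (Fin.init v) T := by
  rw [sumAgreeing, sumAgreeing, sum_filter, sum_filter, sum_fun_fin_succ]
  refine sum_congr rfl fun y _ => ?_
  simp only [forall_mem_insert, forall_mem_map, Fin.coe_castSuccEmb, Fin.snoc_castSucc,
    Fin.snoc_last, Fin.init, ite_and]
  rw [Fintype.sum_ite_eq']
  congr 1

lemma sum_bool_eq_add_not {M : Type*} [AddCommMonoid M] (g : Bool → M) (b : Bool) :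
    ∑ c, g c = g b + g !b := by
  cases b <;> simp [add_comm]

lemma phi_insert_last_sub_phi {m : ℕ} (κ : (Fin (m + 1) → Bool) → Bool)
    (v : Fin (m + 1) → Bool) (T : Finset (Fin m)) :
    phi κ v (insert (Fin.last m) (T.map Fin.castSuccEmb)) - phi κ v (T.map Fin.castSuccEmb)
      = 1 / 2 ^ (m - T.card + 1) *
          sumAgreeing (fun y => (if κ (Fin.snoc y (v (Fin.last m))) then 1 else 0)
            - if κ (Fin.snoc y !v (Fin.last m)) then 1 else 0) (Fin.init v) T := by
  have hlast : Fin.last m ∉ T.map Fin.castSuccEmb := by simp [Fin.castSucc_ne_last]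
  have hT := card_finset_fin_le T
  rw [phi_eq_sumAgreeing, phi_eq_sumAgreeing, sumAgreeing_insert_last_map_castSuccEmb,
    sumAgreeing_map_castSuccEmb, card_insert_of_notMem hlast, card_map, sumAgreeing_sub,
    Nat.add_sub_add_right, show m + 1 - T.card = m - T.card + 1 by omega]
  simp only [sum_bool_eq_add_not _ (v (Fin.last m)), sumAgreeing_add, pow_succ]
  ring

lemma Sv_nonneg_of_forall {n : ℕ} {κ : (Fin n → Bool) → Bool} {v : Fin n → Bool} {i : Fin n}
    (h : ∀ S ⊆ univ.erase i, 0 ≤ phi κ v (insert i S) - phi κ v S) :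
    0 ≤ Sv κ v i :=
  sum_nonneg fun S hS => mul_nonneg (by positivity) (h S (mem_powerset.1 hS))

lemma Sv_pos_of_forall_of_exists {n : ℕ} {κ : (Fin n → Bool) → Bool} {v : Fin n → Bool}
    {i : Fin n} (h : ∀ S ⊆ univ.erase i, 0 ≤ phi κ v (insert i S) - phi κ v S)
    {S₀ : Finset (Fin n)} (hS₀ : S₀ ⊆ univ.erase i)
    (hpos : 0 < phi κ v (insert i S₀) - phi κ v S₀) :
    0 < Sv κ v i :=
  sum_pos' (fun S hS => mul_nonneg (by positivity) (h S (mem_powerset.1 hS)))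
    ⟨S₀, mem_powerset.2 hS₀, mul_pos (by positivity) hpos⟩

lemma exists_map_castSuccEmb_eq {m : ℕ} {S : Finset (Fin (m + 1))}
    (hS : S ⊆ univ.erase (Fin.last m)) : ∃ T : Finset (Fin m), T.map Fin.castSuccEmb = S := by
  have : univ.erase (Fin.last m) = univ.map Fin.castSuccEmb := by
    ext; simp [Fin.exists_castSucc_eq]
  obtain ⟨T, -, rfl⟩ := subset_map_iff.1 (this ▸ hS)
  exact ⟨T, rfl⟩

lemma ite_one_zero_le_of_imp {a b : Bool} (h : a = true → b = true) :
    (if a then 1 else 0 : ℝ) ≤ if b then 1 else 0 := by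
  cases a <;> cases b <;> simp_all

lemma ite_one_zero_lt_of_imp_of_ne {a b : Bool} (h : a = true → b = true) (hne : a ≠ b) :
    (if a then 1 else 0 : ℝ) < if b then 1 else 0 := by
  cases a <;> cases b <;> simp_all

lemma phi_insert_last_sub_phi_of_eq_ite {m : ℕ} {κ₁ κ₂ : (Fin m → Bool) → Bool}
    {κ : (Fin (m + 1) → Bool) → Bool}
    (hκ : ∀ x, κ x = if x (Fin.last m) then κ₂ (fun i => x i.castSucc)
                     else κ₁ (fun i => x i.castSucc))
    (u : Fin m → Bool) (T : Finset (Fin m)) :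
    phi κ (Fin.snoc u true) (insert (Fin.last m) (T.map Fin.castSuccEmb))
        - phi κ (Fin.snoc u true) (T.map Fin.castSuccEmb)
      = 1 / 2 ^ (m - T.card + 1) * (sumAgreeing (fun y => if κ₂ y then 1 else 0) u T
          - sumAgreeing (fun y => if κ₁ y then 1 else 0) u T) := by
  simp [phi_insert_last_sub_phi, sumAgreeing_sub, hκ]

theorem stmt10 (m : ℕ) (κ₁ κ₂ : (Fin m → Bool) → Bool)
    (hent : ∀ y, κ₁ y = true → κ₂ y = true)
    (u : Fin m → Bool)
    (κ : (Fin (m + 1) → Bool) → Bool)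
    (hκ : ∀ x, κ x = if x (Fin.last m) then κ₂ (fun i => x i.castSucc)
                     else κ₁ (fun i => x i.castSucc))
    (v : Fin (m + 1) → Bool) (hv : v = Fin.snoc u true) :
    (∀ T : Finset (Fin m),
      (phi κ v (insert (Fin.last m) (T.map Fin.castSuccEmb))
          - phi κ v (T.map Fin.castSuccEmb)
        = (1 / 2 ^ (m - T.card + 1)) *
            ((∑ y ∈ Finset.univ.filter (fun y : Fin m → Bool => ∀ i ∈ T, y i = u i),
                (if κ₂ y then (1 : ℝ) else 0))
             - ∑ y ∈ Finset.univ.filter (fun y : Fin m → Bool => ∀ i ∈ T, y i = u i),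
                (if κ₁ y then (1 : ℝ) else 0))) ∧
      0 ≤ phi κ v (insert (Fin.last m) (T.map Fin.castSuccEmb))
          - phi κ v (T.map Fin.castSuccEmb)) ∧
    0 ≤ Sv κ v (Fin.last m) ∧
    (κ₁ ≠ κ₂ → 0 < Sv κ v (Fin.last m)) := by
  subst hv
  have hmarg := phi_insert_last_sub_phi_of_eq_ite hκ u
  have hmono (y : Fin m → Bool) := ite_one_zero_le_of_imp (hent y)
  have hnonneg (T : Finset (Fin m)) :
      0 ≤ phi κ (Fin.snoc u true) (insert (Fin.last m) (T.map Fin.castSuccEmb))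
        - phi κ (Fin.snoc u true) (T.map Fin.castSuccEmb) := by
    rw [hmarg]
    exact mul_nonneg (by positivity) (sub_nonneg.2 (sumAgreeing_mono hmono u T))
  have hSv : ∀ S ⊆ univ.erase (Fin.last m),
      0 ≤ phi κ (Fin.snoc u true) (insert (Fin.last m) S) - phi κ (Fin.snoc u true) S := by
    intro S hS
    obtain ⟨T, rfl⟩ := exists_map_castSuccEmb_eq hS
    exact hnonneg T
  refine ⟨fun T => ⟨hmarg T, hnonneg T⟩, Sv_nonneg_of_forall hSv, fun hne => ?_⟩
  obtain ⟨y₀, hy₀⟩ := Function.ne_iff.1 hne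
  have hpos := hmarg ∅ ▸ mul_pos (by positivity) (sub_pos.2 (sumAgreeing_lt_sumAgreeing hmono
    (T := ∅) (by simp) (ite_one_zero_lt_of_imp_of_ne (hent y₀) hy₀)))
  exact Sv_pos_of_forall_of_exists hSv (empty_subset _) (by simpa using hpos)
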